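/- arXiv:2208.02298 — 7 statements merged into one kernel-verified Lean document; each statement's English description precedes it below -/
import Mathlib

section
/- Suppose (α*, β*) is a Nash equilibrium of an additive security game (in marginal form) with k_a ≥ 1 attacker resources. If there exists a target i with α*_i = 0 and β*_i > 0, then for every target j with α*_j > 0 it must hold that β*_j = 1. -/
open Finset

/-- Feasible marginal vectors: entries in `[0,1]` summing to `k`. -/
def Feas (m : ℕ) (k : ℕ) (v : Fin m → ℝ) : Prop :=
  (∀ t, v t ∈ Set.Icc (0 : ℝ) 1) ∧ ∑ t, v t = (k : ℝ)

/-- Attacker expected utility in marginal form. -/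
def va (m : ℕ) (Uac Uau : Fin m → ℝ) (α β : Fin m → ℝ) : ℝ :=
  ∑ t, α t * (Uac t * β t + Uau t * (1 - β t))

/-- Defender expected utility in marginal form. -/
def vd (m : ℕ) (Udc Udu : Fin m → ℝ) (α β : Fin m → ℝ) : ℝ :=
  ∑ t, α t * (Udc t * β t + Udu t * (1 - β t))

/-- Nash equilibrium of the marginal-form additive security game. -/
def NashEq (m ka kd : ℕ) (Uac Uau Udc Udu : Fin m → ℝ) (α β : Fin m → ℝ) : Prop :=
  Feas m ka α ∧ Feas m kd β ∧
  (∀ α', Feas m ka α' → va m Uac Uau α' β ≤ va m Uac Uau α β) ∧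
  (∀ β', Feas m kd β' → vd m Udc Udu α β' ≤ vd m Udc Udu α β)

/-- At a Nash equilibrium with `k_a ≥ 1`, if some target `i` has
`α*_i = 0` and `β*_i > 0`, then every target `j` with `α*_j > 0` has `β*_j = 1`. -/
theorem stmt7 (m ka kd : ℕ) (hka : 1 ≤ ka) (hkam : ka < m) (hkd : 1 ≤ kd) (hkdm : kd < m)
    (Uac Uau Udc Udu : Fin m → ℝ)
    (hΔa : ∀ t, 0 < Uau t - Uac t) (hΔd : ∀ t, 0 < Udc t - Udu t)
    (α β : Fin m → ℝ)
    (hNE : NashEq m ka kd Uac Uau Udc Udu α β)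
    (i : Fin m) (hi0 : α i = 0) (hiβ : 0 < β i) :
    ∀ j : Fin m, 0 < α j → β j = 1 := by
  intro j hαj
  by_contra hβj
  obtain ⟨hβfeas1, hβfeas2⟩ := hNE.2.1
  have hβj1 : β j < 1 := lt_of_le_of_ne (hβfeas1 j).2 hβj
  have hij : i ≠ j := fun h => by rw [h] at hi0; exact hαj.ne' hi0
  set ε : ℝ := min (β i) (1 - β j) with hε
  have hεpos : 0 < ε := lt_min hiβ (by linarith)
  have hεi : ε ≤ β i := min_le_left _ _
  have hεj : ε ≤ 1 - β j := min_le_right _ _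
  set β' : Fin m → ℝ := fun t => if t = i then β i - ε else if t = j then β j + ε else β t with hβ'
  have hβ'i : β' i = β i - ε := by simp [hβ']
  have hβ'j : β' j = β j + ε := by simp [hβ', hij.symm]
  have hβ'o : ∀ t, t ≠ i → t ≠ j → β' t = β t := by
    intro t h1 h2; simp [hβ', h1, h2]
  have hfeas : Feas m kd β' := by
    constructor
    · intro t
      rcases eq_or_ne t i with rfl | h1
      · rw [hβ'i]
        exact ⟨by linarith, by have := (hβfeas1 t).2; linarith⟩
      rcases eq_or_ne t j with rfl | h2
      · rw [hβ'j]
        exact ⟨by have := (hβfeas1 t).1; linarith, by linarith⟩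
      · rw [hβ'o t h1 h2]; exact hβfeas1 t
    · have : ∑ t, β' t = ∑ t, β t := by
        have h0 : ∑ t, (β' t - β t) = 0 := by
          rw [Finset.sum_eq_add_of_mem i j (Finset.mem_univ _) (Finset.mem_univ _) hij]
          · rw [hβ'i, hβ'j]; ring
          · intro t _ ht
            rw [hβ'o t ht.1 ht.2]; ring
        have := Finset.sum_sub_distrib (f := β') (g := β) (s := Finset.univ)
        rw [this] at h0
        linarith
      rw [this, hβfeas2]
  have hle := hNE.2.2.2 β' hfeas
  have hdiff : vd m Udc Udu α β' - vd m Udc Udu α β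
      = α j * (Udc j - Udu j) * ε := by
    unfold vd
    rw [← Finset.sum_sub_distrib]
    rw [Finset.sum_eq_single j]
    · rw [hβ'j]; ring
    · intro t _ ht
      rcases eq_or_ne t i with rfl | h1
      · rw [hi0]; ring
      · rw [hβ'o t h1 ht]; ring
    · intro h; exact absurd (Finset.mem_univ j) h
  have hpos : 0 < α j * (Udc j - Udu j) * ε :=
    mul_pos (mul_pos hαj (hΔd j)) hεpos
  linarith
end

section
/- Let (α*, β*) be a Nash equilibrium of an additive security game in marginal form. If targets i, j satisfy β*_i > 0 and β*_j < 1, then α*_j Δ_d(j) ≤ α*_i Δ_d(i). -/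
open Finset

/-- At a Nash equilibrium, if `β*_i > 0` and `β*_j < 1`, then
`α*_j * Δd j ≤ α*_i * Δd i` where `Δd t = Udc t - Udu t`. -/
theorem stmt9 (m ka kd : ℕ) (hka : 1 ≤ ka) (hkam : ka < m) (hkd : 1 ≤ kd) (hkdm : kd < m)
    (Uac Uau Udc Udu : Fin m → ℝ)
    (hΔa : ∀ t, 0 < Uau t - Uac t) (hΔd : ∀ t, 0 < Udc t - Udu t)
    (α β : Fin m → ℝ)
    (hNE : NashEq m ka kd Uac Uau Udc Udu α β)
    (i j : Fin m) (hi : 0 < β i) (hj : β j < 1) :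
    α j * (Udc j - Udu j) ≤ α i * (Udc i - Udu i) := by
  by_contra hlt
  push_neg at hlt
  rcases hNE with ⟨hαF, hβF, _, hdBR⟩
  rcases hβF with ⟨hβ01, hβsum⟩
  have hij : i ≠ j := by
    rintro rfl; exact absurd hlt (lt_irrefl _)
  set ε : ℝ := min (β i) (1 - β j) with hε
  have hεpos : 0 < ε := lt_min hi (by linarith)
  set β' : Fin m → ℝ := fun t => β t + (if t = j then ε else 0) - (if t = i then ε else 0) with hβ'
  have hεi : ε ≤ β i := min_le_left _ _
  have hεj : ε ≤ 1 - β j := min_le_right _ _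
  have hfeas : Feas m kd β' := by
    constructor
    · intro t
      have h01 := hβ01 t
      simp only [Set.mem_Icc] at h01 ⊢
      simp only [hβ']
      by_cases hti : t = i
      · subst hti
        rw [if_pos rfl, if_neg hij]
        constructor <;> linarith
      · rw [if_neg hti]
        by_cases htj : t = j
        · subst htj
          rw [if_pos rfl]
          constructor <;> linarith
        · rw [if_neg htj]
          constructor <;> linarith
    · simp only [hβ']
      rw [Finset.sum_sub_distrib, Finset.sum_add_distrib,
        Finset.sum_ite_eq' Finset.univ j (fun _ => ε),
        Finset.sum_ite_eq' Finset.univ i (fun _ => ε)]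
      simp [hβsum]
  have key : vd m Udc Udu α β' - vd m Udc Udu α β
      = ε * (α j * (Udc j - Udu j)) - ε * (α i * (Udc i - Udu i)) := by
    simp only [vd, hβ', ← Finset.sum_sub_distrib]
    have : ∀ t, α t * (Udc t * (β t + (if t = j then ε else 0) - (if t = i then ε else 0)) +
          Udu t * (1 - (β t + (if t = j then ε else 0) - (if t = i then ε else 0)))) -
        α t * (Udc t * β t + Udu t * (1 - β t))
        = (if t = j then ε * (α t * (Udc t - Udu t)) else 0) -
          (if t = i then ε * (α t * (Udc t - Udu t)) else 0) := by
      intro t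
      by_cases htj : t = j <;> by_cases hti : t = i <;>
        simp [htj, hti, hij, Ne.symm hij] <;> ring
    rw [Finset.sum_congr rfl (fun t _ => this t), Finset.sum_sub_distrib,
      Finset.sum_ite_eq' Finset.univ j, Finset.sum_ite_eq' Finset.univ i]
    simp
  have := hdBR β' hfeas
  nlinarith [mul_lt_mul_of_pos_left hlt hεpos]
end

section
/- In an additive security game in marginal form, if (α*, β*) is a Nash equilibrium, then there exists a constant c₂ such that α*_i Δ_d(i) = c₂ for every target i with β*_i ∈ (0,1). -/
open Finset

lemma key (m kd : ℕ) (Udc Udu : Fin m → ℝ) (α β : Fin m → ℝ)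
    (hFβ : Feas m kd β)
    (hD : ∀ β', Feas m kd β' → vd m Udc Udu α β' ≤ vd m Udc Udu α β)
    (i j : Fin m) (hij : i ≠ j) (hi : 0 < β i) (hj : β j < 1) :
    α j * (Udc j - Udu j) ≤ α i * (Udc i - Udu i) := by
  obtain ⟨hβ01, hβsum⟩ := hFβ
  set ε := min (β i) (1 - β j) with hεdef
  have hε : 0 < ε := lt_min hi (by linarith)
  have hεi : ε ≤ β i := min_le_left _ _
  have hεj : ε ≤ 1 - β j := min_le_right _ _
  set β' : Fin m → ℝ := fun t => β t + (if t = j then ε else 0) - (if t = i then ε else 0)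
    with hβ'def
  have hfeas : Feas m kd β' := by
    constructor
    · intro t
      have h01 := hβ01 t
      simp only [Set.mem_Icc] at h01 ⊢
      by_cases hti : t = i
      · subst hti
        simp [hβ'def, hij, Set.mem_Icc]
        constructor <;> [linarith; linarith [h01.2]]
      · by_cases htj : t = j
        · subst htj
          simp [hβ'def, Ne.symm hij, Set.mem_Icc]
          constructor <;> linarith [h01.1]
        · simpa [hβ'def, hti, htj] using h01
    · simp only [hβ'def]
      rw [Finset.sum_sub_distrib, Finset.sum_add_distrib]
      simp [hβsum]
  have hle := hD β' hfeas
  have hdiff : vd m Udc Udu α β' - vd m Udc Udu α β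
      = ε * (α j * (Udc j - Udu j)) - ε * (α i * (Udc i - Udu i)) := by
    unfold vd
    rw [← Finset.sum_sub_distrib]
    have : ∀ t ∈ Finset.univ, α t * (Udc t * β' t + Udu t * (1 - β' t))
        - α t * (Udc t * β t + Udu t * (1 - β t))
        = α t * (Udc t - Udu t) * ((if t = j then ε else 0) - (if t = i then ε else 0)) := by
      intro t _
      simp only [hβ'def]
      ring
    rw [Finset.sum_congr rfl this]
    simp only [mul_sub, mul_ite, mul_zero]
    rw [Finset.sum_sub_distrib]
    simp [Finset.sum_ite_eq']
    ring
  nlinarith [hε]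

/-- At a Nash equilibrium there is a constant `c₂` with
`α*_i * Δd i = c₂` for every target `i` with `β*_i ∈ (0,1)`. -/
theorem stmt11 (m ka kd : ℕ) (hka : 1 ≤ ka) (hkam : ka < m) (hkd : 1 ≤ kd) (hkdm : kd < m)
    (Uac Uau Udc Udu : Fin m → ℝ)
    (hΔa : ∀ t, 0 < Uau t - Uac t) (hΔd : ∀ t, 0 < Udc t - Udu t)
    (α β : Fin m → ℝ)
    (hNE : NashEq m ka kd Uac Uau Udc Udu α β) :
    ∃ c₂ : ℝ, ∀ i : Fin m, 0 < β i → β i < 1 →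
      α i * (Udc i - Udu i) = c₂ := by
  obtain ⟨hFα, hFβ, hA, hD⟩ := hNE
  by_cases h : ∃ i₀ : Fin m, 0 < β i₀ ∧ β i₀ < 1
  · obtain ⟨i₀, hi₀, hi₀'⟩ := h
    refine ⟨α i₀ * (Udc i₀ - Udu i₀), fun i hi hi' => ?_⟩
    by_cases hii : i = i₀
    · rw [hii]
    · exact le_antisymm (key m kd Udc Udu α β hFβ hD i₀ i (fun e => hii e.symm) hi₀ hi')
        (key m kd Udc Udu α β hFβ hD i i₀ hii hi hi₀')
  · exact ⟨0, fun i hi hi' => absurd ⟨i, hi, hi'⟩ h⟩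
end

section
/- Let (α,β) be a pair of marginal attack/defense vectors and suppose there exist constants c₁, c₂ such that for all targets t: (β_t ≠ 0 ⟹ α_t Δ_d(t) ≥ c₂), (β_t ≠ 1 ⟹ α_t Δ_d(t) ≤ c₂), (α_t ≠ 0 ⟹ β_t U_a^c(t) + (1−β_t)U_a^u(t) ≥ c₁), and (α_t ≠ 1 ⟹ β_t U_a^c(t) + (1−β_t)U_a^u(t) ≤ c₁). Then (α,β) is a Nash equilibrium. -/
open Finset

lemma key_sum (m k : ℕ) (f x y : Fin m → ℝ) (hx : Feas m k x) (hy : Feas m k y) (c : ℝ)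
    (h1 : ∀ t, x t ≠ 0 → c ≤ f t) (h2 : ∀ t, x t ≠ 1 → f t ≤ c) :
    ∑ t, y t * f t ≤ ∑ t, x t * f t := by
  have key : ∀ t, y t * f t - x t * f t ≤ (y t - x t) * c := by
    intro t
    rcases lt_trichotomy (y t) (x t) with h | h | h
    · have hx0 : x t ≠ 0 := by
        have := (hy.1 t).1; intro h0; rw [h0] at h; linarith
      nlinarith [h1 t hx0]
    · simp [h]
    · have hx1 : x t ≠ 1 := by
        have := (hy.1 t).2; intro h0; rw [h0] at h; linarith
      nlinarith [h2 t hx1]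
  have hsum : ∑ t, (y t * f t - x t * f t) ≤ ∑ t, (y t - x t) * c :=
    Finset.sum_le_sum fun t _ => key t
  have : ∑ t, (y t - x t) * c = 0 := by
    rw [← Finset.sum_mul, Finset.sum_sub_distrib, hx.2, hy.2]
    ring
  rw [Finset.sum_sub_distrib] at hsum
  rw [this] at hsum
  linarith

/-- If feasible `(α,β)` admit constants `c₁, c₂` satisfying the four
threshold conditions, then `(α,β)` is a Nash equilibrium. -/
theorem stmt12 (m ka kd : ℕ) (hka : 1 ≤ ka) (hkam : ka < m) (hkd : 1 ≤ kd) (hkdm : kd < m)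
    (Uac Uau Udc Udu : Fin m → ℝ)
    (hΔa : ∀ t, 0 < Uau t - Uac t) (hΔd : ∀ t, 0 < Udc t - Udu t)
    (α β : Fin m → ℝ)
    (hfa : Feas m ka α) (hfb : Feas m kd β)
    (c₁ c₂ : ℝ)
    (h1 : ∀ t, β t ≠ 0 → c₂ ≤ α t * (Udc t - Udu t))
    (h2 : ∀ t, β t ≠ 1 → α t * (Udc t - Udu t) ≤ c₂)
    (h3 : ∀ t, α t ≠ 0 → c₁ ≤ β t * Uac t + (1 - β t) * Uau t)
    (h4 : ∀ t, α t ≠ 1 → β t * Uac t + (1 - β t) * Uau t ≤ c₁) :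
    NashEq m ka kd Uac Uau Udc Udu α β := by
  refine ⟨hfa, hfb, ?_, ?_⟩
  · intro α' hfa'
    have := key_sum m ka (fun t => Uac t * β t + Uau t * (1 - β t)) α α' hfa hfa' c₁
      (fun t ht => by show c₁ ≤ Uac t * β t + Uau t * (1 - β t); linarith [h3 t ht])
      (fun t ht => by show Uac t * β t + Uau t * (1 - β t) ≤ c₁; linarith [h4 t ht])
    simpa [va] using this
  · intro β' hfb'
    have := key_sum m kd (fun t => α t * (Udc t - Udu t)) β β' hfb hfb' c₂ h1 h2
    have eq : ∀ γ : Fin m → ℝ, vd m Udc Udu α γ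
        = (∑ t, γ t * (α t * (Udc t - Udu t))) + ∑ t, α t * Udu t := by
      intro γ
      rw [vd, ← Finset.sum_add_distrib]
      exact Finset.sum_congr rfl fun t _ => by ring
    rw [eq β', eq β]
    linarith
end

section
/- In an additive security game in marginal form with k_d > k_a, define α by α_i = 1 for the k_a targets of largest U_a^c value and α_i = 0 otherwise (assuming U_a^c values are distinct), and define β by β_i = 1 on a set of k_d targets containing all targets with α_i = 1, and β_i = 0 elsewhere. Then (α, β) is a Nash equilibrium provided that U_a^c(t) ≤ min_{t′ attacked} U_a^c(t′) for every unattacked target t, and U_a^u(t) ≤ min_{t′ attacked} U_a^c(t′) for every unattacked uncovered target t. -/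
open Finset

lemma aux_sum_ind (k m : ℕ) (hk : k ≤ m) :
    ∑ i ∈ Finset.range m, (if k ≤ i then (1:ℝ) else 0) = ((m - k : ℕ) : ℝ) := by
  induction m with
  | zero => simp
  | succ n ih =>
    rw [Finset.sum_range_succ]
    by_cases h : k ≤ n
    · rw [ih h, if_pos h]
      have : n + 1 - k = (n - k) + 1 := by omega
      rw [this]; push_cast; ring
    · have hk' : k = n + 1 := by omega
      subst hk'
      rw [if_neg h]
      have hz : ∑ i ∈ Finset.range n, (if n + 1 ≤ i then (1:ℝ) else 0) = 0 := by
        apply Finset.sum_eq_zero; intro i hi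
        simp only [Finset.mem_range] at hi
        rw [if_neg (by omega)]
      rw [hz]; simp

/-- With `k_d > k_a` and targets ordered by strictly increasing
`Uac`, set `α = 1` on the top `k_a` targets (indices `≥ m - k_a`) and `0` elsewhere,
and `β = 1` on a set `D` of `k_d` targets containing the top `k_a` targets and `0`
elsewhere. If every unattacked uncovered target `t` satisfies
`Uau t ≤ Uac (m - k_a + 1)` (the least attacked target's covered payoff), then
`(α, β)` is a Nash equilibrium. -/
theorem stmt14 (m ka kd : ℕ) (hka : 1 ≤ ka) (hkam : ka < m)
    (hkakd : ka < kd) (hkdm : kd < m)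
    (Uac Uau Udc Udu : Fin m → ℝ)
    (hΔa : ∀ t, 0 < Uau t - Uac t) (hΔd : ∀ t, 0 < Udc t - Udu t)
    (hord : ∀ i j : Fin m, i < j → Uac i < Uac j)
    (D : Finset (Fin m)) (hD : D.card = kd)
    (hDtop : ∀ i : Fin m, m - ka ≤ (i : ℕ) → i ∈ D)
    (α β : Fin m → ℝ)
    (hα : ∀ i : Fin m, α i = if m - ka ≤ (i : ℕ) then 1 else 0)
    (hβ : ∀ i : Fin m, β i = if i ∈ D then 1 else 0)
    (hU : ∀ t : Fin m, (t : ℕ) < m - ka → t ∉ D →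
      Uau t ≤ Uac ⟨m - ka, by omega⟩) :
    NashEq m ka kd Uac Uau Udc Udu α β := by
  have hmk : m - ka < m := by omega
  set t0 : Fin m := ⟨m - ka, hmk⟩ with ht0
  set c := Uac t0 with hc
  -- monotonicity facts
  have hge : ∀ t : Fin m, m - ka ≤ (t : ℕ) → c ≤ Uac t := by
    intro t ht
    rcases eq_or_lt_of_le ht with h | h
    · have : t0 = t := Fin.ext h
      rw [hc, this]
    · exact le_of_lt (hord t0 t h)
  have hlt : ∀ t : Fin m, (t : ℕ) < m - ka → Uac t < c := fun t ht => hord t t0 ht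
  -- p t : payoff of attacking t given β
  have hpD : ∀ t, t ∈ D → Uac t * β t + Uau t * (1 - β t) = Uac t := by
    intro t ht; rw [hβ t, if_pos ht]; ring
  have hpnD : ∀ t, t ∉ D → Uac t * β t + Uau t * (1 - β t) = Uau t := by
    intro t ht; rw [hβ t, if_neg ht]; ring
  have hple : ∀ t : Fin m, (t : ℕ) < m - ka →
      Uac t * β t + Uau t * (1 - β t) ≤ c := by
    intro t ht
    by_cases hd : t ∈ D
    · rw [hpD t hd]; exact le_of_lt (hlt t ht)
    · rw [hpnD t hd]; exact hU t ht hd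
  have hpge : ∀ t : Fin m, m - ka ≤ (t : ℕ) →
      c ≤ Uac t * β t + Uau t * (1 - β t) := by
    intro t ht
    rw [hpD t (hDtop t ht)]; exact hge t ht
  -- feasibility of α
  have hFα : Feas m ka α := by
    constructor
    · intro t; rw [hα t]; split <;> norm_num
    · have : ∑ t : Fin m, α t
          = ∑ i ∈ Finset.range m, (if m - ka ≤ i then (1:ℝ) else 0) := by
        rw [← Fin.sum_univ_eq_sum_range]
        exact Finset.sum_congr rfl fun t _ => hα t
      rw [this, aux_sum_ind (m - ka) m (by omega)]
      congr 1; omega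
  -- feasibility of β
  have hFβ : Feas m kd β := by
    constructor
    · intro t; rw [hβ t]; split <;> norm_num
    · calc ∑ t : Fin m, β t = ∑ t : Fin m, (if t ∈ D then (1:ℝ) else 0) :=
            Finset.sum_congr rfl fun t _ => hβ t
        _ = (kd : ℝ) := by
            rw [Finset.sum_ite_mem, Finset.univ_inter, Finset.sum_const, hD,
              nsmul_eq_mul, mul_one]
  refine ⟨hFα, hFβ, ?_, ?_⟩
  · -- attacker best response
    rintro α' ⟨hα'01, hα'sum⟩
    unfold va
    have key : ∀ t : Fin m,
        α' t * (Uac t * β t + Uau t * (1 - β t))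
          ≤ α t * (Uac t * β t + Uau t * (1 - β t)) + (α' t - α t) * c := by
      intro t
      obtain ⟨h0, h1⟩ := hα'01 t
      by_cases h : m - ka ≤ (t : ℕ)
      · rw [hα t, if_pos h]
        have := hpge t h
        nlinarith
      · rw [hα t, if_neg h]
        have := hple t (by omega)
        nlinarith
    calc ∑ t, α' t * (Uac t * β t + Uau t * (1 - β t))
        ≤ ∑ t, (α t * (Uac t * β t + Uau t * (1 - β t)) + (α' t - α t) * c) :=
          Finset.sum_le_sum fun t _ => key t
      _ = ∑ t, α t * (Uac t * β t + Uau t * (1 - β t))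
          + (∑ t, α' t - ∑ t, α t) * c := by
          rw [Finset.sum_add_distrib, ← Finset.sum_mul, Finset.sum_sub_distrib]
      _ = ∑ t, α t * (Uac t * β t + Uau t * (1 - β t)) := by
          rw [hα'sum, hFα.2]; ring
  · -- defender best response
    rintro β' ⟨hβ'01, _⟩
    unfold vd
    apply Finset.sum_le_sum
    intro t _
    obtain ⟨h0, h1⟩ := hβ'01 t
    by_cases h : m - ka ≤ (t : ℕ)
    · rw [hα t, if_pos h, hβ t, if_pos (hDtop t h)]
      have := hΔd t
      nlinarith
    · rw [hα t, if_neg h]; simp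
end

section
/- In an additive security game in marginal form with fully protective resources, if (α*, β*) is a Nash equilibrium then there is no target i with α*_i = 0 and β*_i > 0 (i.e., no defense probability is wasted on targets that are never attacked). -/
open Finset

/-- Attacker expected utility, fully protective resources (`Uac ≡ 0`). -/
def vaFP (m : ℕ) (Uau : Fin m → ℝ) (α β : Fin m → ℝ) : ℝ :=
  ∑ t, α t * Uau t * (1 - β t)

/-- Defender expected utility, fully protective resources (`Udc ≡ 0`). -/
def vdFP (m : ℕ) (Udu : Fin m → ℝ) (α β : Fin m → ℝ) : ℝ :=
  ∑ t, α t * Udu t * (1 - β t)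

/-- Nash equilibrium of the marginal-form game with fully protective resources. -/
def NashEqFP (m ka kd : ℕ) (Uau Udu : Fin m → ℝ) (α β : Fin m → ℝ) : Prop :=
  Feas m ka α ∧ Feas m kd β ∧
  (∀ α', Feas m ka α' → vaFP m Uau α' β ≤ vaFP m Uau α β) ∧
  (∀ β', Feas m kd β' → vdFP m Udu α β' ≤ vdFP m Udu α β)

lemma move_feas {m k : ℕ} {v : Fin m → ℝ} (hv : Feas m k v) (a b : Fin m) (hab : a ≠ b)
    {ε : ℝ} (hε0 : 0 ≤ ε) (hεa : ε ≤ v a) (hεb : v b + ε ≤ 1) :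
    Feas m k (fun t => v t + ((if t = b then ε else 0) - (if t = a then ε else 0))) := by
  obtain ⟨hbd, hsum⟩ := hv
  constructor
  · intro t
    rcases eq_or_ne t b with rfl|htb
    · simp only [if_pos rfl, if_neg (fun h => hab (h ▸ rfl) : ¬ t = a)]
      constructor
      · have := (hbd t).1; simp; linarith
      · simp; linarith
    · rcases eq_or_ne t a with rfl|hta
      · simp only [if_neg htb, if_pos rfl]
        have h1 := (hbd t).2
        constructor
        · simp; linarith
        · simp; linarith
      · simp only [if_neg htb, if_neg hta]
        simpa using hbd t
  · rw [Finset.sum_add_distrib, hsum, Finset.sum_sub_distrib]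
    simp

lemma va_move {m : ℕ} (Uau : Fin m → ℝ) (α β : Fin m → ℝ) (a b : Fin m) (ε : ℝ) :
    vaFP m Uau (fun t => α t + ((if t = b then ε else 0) - (if t = a then ε else 0))) β
      = vaFP m Uau α β + ε * (Uau b * (1 - β b)) - ε * (Uau a * (1 - β a)) := by
  unfold vaFP
  have : ∀ t : Fin m,
      (α t + ((if t = b then ε else 0) - (if t = a then ε else 0))) * Uau t * (1 - β t)
      = α t * Uau t * (1 - β t)
        + (if t = b then ε * (Uau t * (1 - β t)) else 0)
        - (if t = a then ε * (Uau t * (1 - β t)) else 0) := by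
    intro t; split <;> split <;> ring
  simp only [this, Finset.sum_add_distrib, Finset.sum_sub_distrib, Finset.sum_ite_eq',
    Finset.mem_univ, if_pos]

lemma vd_move {m : ℕ} (Udu : Fin m → ℝ) (α β : Fin m → ℝ) (a b : Fin m) (ε : ℝ) :
    vdFP m Udu α (fun t => β t + ((if t = b then ε else 0) - (if t = a then ε else 0)))
      = vdFP m Udu α β - ε * (α b * Udu b) + ε * (α a * Udu a) := by
  unfold vdFP
  have : ∀ t : Fin m,
      α t * Udu t * (1 - (β t + ((if t = b then ε else 0) - (if t = a then ε else 0))))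
      = α t * Udu t * (1 - β t)
        - (if t = b then ε * (α t * Udu t) else 0)
        + (if t = a then ε * (α t * Udu t) else 0) := by
    intro t; split <;> split <;> ring
  simp only [this, Finset.sum_add_distrib, Finset.sum_sub_distrib, Finset.sum_ite_eq',
    Finset.mem_univ, if_pos]

/-- In a fully protective game with `k_a ≥ 1` and `k_d < m`, at any
Nash equilibrium no target has `α*_i = 0` and `β*_i > 0`. -/
theorem stmt16 (m ka kd : ℕ) (hka : 1 ≤ ka) (hkam : ka < m) (hkd : 1 ≤ kd) (hkdm : kd < m)
    (Uau Udu : Fin m → ℝ) (hUau : ∀ t, 0 < Uau t) (hUdu : ∀ t, Udu t < 0)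
    (α β : Fin m → ℝ)
    (hNE : NashEqFP m ka kd Uau Udu α β) :
    ¬ ∃ i : Fin m, α i = 0 ∧ 0 < β i := by
  rintro ⟨i, hαi, hβi⟩
  obtain ⟨hFα, hFβ, hA, hD⟩ := hNE
  -- Step 1: there is a target j with α j > 0 and β j < 1
  have hj : ∃ j, 0 < α j ∧ β j < 1 := by
    by_contra h
    push_neg at h
    obtain ⟨j, hjα⟩ : ∃ j, 0 < α j := by
      by_contra h'
      push_neg at h'
      have h1 : ∑ t, α t ≤ 0 := Finset.sum_nonpos fun t _ => h' t
      rw [hFα.2] at h1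
      have h2 : (1:ℝ) ≤ (ka:ℝ) := by exact_mod_cast hka
      linarith
    obtain ⟨s, hsβ⟩ : ∃ s, β s < 1 := by
      by_contra h'
      push_neg at h'
      have h1 : ∀ t, β t = 1 := fun t => le_antisymm ((hFβ.1 t).2) (h' t)
      have h2 : ∑ t, β t = (m:ℝ) := by simp [h1]
      rw [hFβ.2] at h2
      have h3 : (kd:ℝ) < (m:ℝ) := by exact_mod_cast hkdm
      linarith
    have hαs : α s = 0 := by
      by_contra h'
      have := h s (lt_of_le_of_ne (hFα.1 s).1 (Ne.symm h'))
      linarith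
    have hjs : j ≠ s := by
      intro h'; rw [h', hαs] at hjα; exact lt_irrefl _ hjα
    set ε := min (α j) (1 - α s) with hεdef
    have hε0 : 0 < ε := lt_min hjα (by rw [hαs]; norm_num)
    have hF' := move_feas hFα j s hjs hε0.le (min_le_left _ _)
      (by have := min_le_right (α j) (1 - α s); linarith)
    have hle := hA _ hF'
    rw [va_move] at hle
    have hβj1 : β j = 1 := le_antisymm ((hFβ.1 j).2) (h j hjα)
    have hpos : 0 < ε * (Uau s * (1 - β s)) :=
      mul_pos hε0 (mul_pos (hUau s) (by linarith))
    rw [hβj1] at hle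
    simp at hle
    linarith
  obtain ⟨j, hjα, hjβ⟩ := hj
  have hij : i ≠ j := by
    intro h'; rw [h'] at hαi; rw [hαi] at hjα; exact lt_irrefl _ hjα
  set ε := min (β i) (1 - β j) with hεdef
  have hε0 : 0 < ε := lt_min hβi (by linarith)
  have hF' := move_feas hFβ i j hij hε0.le (min_le_left _ _)
    (by have := min_le_right (β i) (1 - β j); linarith)
  have hle := hD _ hF'
  rw [vd_move] at hle
  have hpos : 0 < ε * (-(α j * Udu j)) :=
    mul_pos hε0 (by nlinarith [hUdu j])
  rw [hαi] at hle
  simp at hle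
  nlinarith
end

section
/- Fix m, k ≥ 1 with k ≤ m. For the least-squares additive approximation of f : 2^[m] → ℝ over 2^{≤k}, the optimal vector x ∈ ℝ^m satisfies for each i the normal equation ∑_{S∈2^{≤k}, i∈S} f(S) = (∑_{t=0}^{k−1} C(m−1,t)) x_i + (∑_{t=0}^{k−2} C(m−2,t)) ∑_{j≠i} x_j, where C(n,t) denotes the binomial coefficient. -/
open Finset

lemma count_powerset {α : Type*} [DecidableEq α] (A : Finset α) (r : ℕ) :
    (A.powerset.filter fun T => T.card ≤ r).card
      = ∑ t ∈ Finset.range (r + 1), A.card.choose t := by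
  have h : (A.powerset.filter fun T => T.card ≤ r)
      = (Finset.range (r + 1)).biUnion (fun t => A.powersetCard t) := by
    ext T
    simp only [Finset.mem_filter, Finset.mem_powerset, Finset.mem_biUnion,
      Finset.mem_range, Finset.mem_powersetCard, Nat.lt_succ_iff]
    constructor
    · rintro ⟨h1, h2⟩; exact ⟨T.card, h2, h1, rfl⟩
    · rintro ⟨t, ht, h1, h2⟩; exact ⟨h1, h2 ▸ ht⟩
  rw [h, Finset.card_biUnion]
  · simp [Finset.card_powersetCard]
  · intro s _ t _ hst
    refine Finset.disjoint_left.mpr fun T hT hT' => hst ?_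
    rw [Finset.mem_powersetCard] at hT hT'
    omega

lemma count_supersets {α : Type*} [Fintype α] [DecidableEq α] (B : Finset α) (r : ℕ)
    (hB : B.card ≤ r) :
    (Finset.univ.filter fun S : Finset α => B ⊆ S ∧ S.card ≤ r).card
      = ∑ t ∈ Finset.range (r - B.card + 1), (Fintype.card α - B.card).choose t := by
  have hcard : (Finset.univ \ B).card = Fintype.card α - B.card := by
    simp [Finset.card_sdiff_of_subset (Finset.subset_univ B)]
  rw [← hcard, ← count_powerset (Finset.univ \ B) (r - B.card)]
  apply Finset.card_nbij' (fun S => S \ B) (fun T => T ∪ B)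
  · intro S hS
    simp only [Finset.mem_coe, Finset.mem_filter, Finset.mem_univ, true_and] at hS
    simp only [Finset.mem_coe, Finset.mem_filter, Finset.mem_powerset]
    constructor
    · exact Finset.sdiff_subset_sdiff (Finset.subset_univ S) (le_refl B)
    · have h1 := Finset.card_sdiff_of_subset hS.1
      have h2 := Finset.card_le_card hS.1
      omega
  · intro T hT
    simp only [Finset.mem_coe, Finset.mem_filter, Finset.mem_powerset] at hT
    simp only [Finset.mem_coe, Finset.mem_filter, Finset.mem_univ, true_and]
    have hdisj : Disjoint T B := by
      refine Finset.disjoint_left.mpr fun p hp hpB => ?_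
      have := hT.1 hp
      simp only [Finset.mem_sdiff] at this
      exact this.2 hpB
    refine ⟨Finset.subset_union_right, ?_⟩
    rw [Finset.card_union_of_disjoint hdisj]
    omega
  · intro S hS
    simp only [Finset.mem_coe, Finset.mem_filter, Finset.mem_univ, true_and] at hS
    exact Finset.sdiff_union_of_subset hS.1
  · intro T hT
    simp only [Finset.mem_coe, Finset.mem_filter, Finset.mem_powerset] at hT
    apply Finset.union_sdiff_cancel_right
    refine Finset.disjoint_left.mpr fun p hp hpB => ?_
    have := hT.1 hp
    simp only [Finset.mem_sdiff] at this
    exact this.2 hpB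

/-- The squared ℓ² error over nonempty subsets of cardinality at most `k`. -/
noncomputable def addErr (m k : ℕ) (f : Finset (Fin m) → ℝ) (x : Fin m → ℝ) : ℝ :=
  ∑ S ∈ Finset.univ.filter
      (fun S : Finset (Fin m) => 1 ≤ S.card ∧ S.card ≤ k),
    ((∑ i ∈ S, x i) - f S) ^ 2

/-- The least-squares optimal vector `x` satisfies, for each `i`, the
normal equation
`∑_{S ∈ 2^{≤k}, i ∈ S} f S = (∑_{t<k} C(m-1,t)) x_i + (∑_{t<k-1} C(m-2,t)) ∑_{j≠i} x_j`. -/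
theorem stmt18 (m k : ℕ) (hk1 : 1 ≤ k) (hkm : k ≤ m)
    (f : Finset (Fin m) → ℝ) (x : Fin m → ℝ)
    (hmin : ∀ y : Fin m → ℝ, addErr m k f x ≤ addErr m k f y) :
    ∀ i : Fin m,
      (∑ S ∈ Finset.univ.filter
          (fun S : Finset (Fin m) => i ∈ S ∧ S.card ≤ k), f S) =
        ((∑ t ∈ Finset.range k, (Nat.choose (m - 1) t : ℝ)) * x i) +
          (∑ t ∈ Finset.range (k - 1), (Nat.choose (m - 2) t : ℝ)) *
            ∑ j ∈ Finset.univ.filter (fun j : Fin m => j ≠ i), x j := by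
  intro i
  set Ffull := Finset.univ.filter
      (fun S : Finset (Fin m) => 1 ≤ S.card ∧ S.card ≤ k) with hFfull
  set Fi := Finset.univ.filter
      (fun S : Finset (Fin m) => i ∈ S ∧ S.card ≤ k) with hFi
  have hFiFfull : Fi = Ffull.filter (fun S => i ∈ S) := by
    ext S
    simp only [hFi, hFfull, Finset.mem_filter, Finset.mem_univ, true_and]
    constructor
    · rintro ⟨h1, h2⟩
      exact ⟨⟨Finset.card_pos.mpr ⟨i, h1⟩, h2⟩, h1⟩
    · rintro ⟨⟨_, h2⟩, h1⟩; exact ⟨h1, h2⟩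
  set a : ℝ := ∑ S ∈ Fi, ((∑ j ∈ S, x j) - f S) with ha
  set b : ℝ := (Fi.card : ℝ) with hb
  -- quadratic expansion of the error along the i-th coordinate direction
  have expand : ∀ t : ℝ,
      addErr m k f (Function.update x i (x i + t))
        = addErr m k f x + (2 * t * a + t ^ 2 * b) := by
    intro t
    have key : ∀ S ∈ Ffull,
        ((∑ j ∈ S, Function.update x i (x i + t) j) - f S) ^ 2
          = ((∑ j ∈ S, x j) - f S) ^ 2
            + (if i ∈ S then 2 * t * ((∑ j ∈ S, x j) - f S) + t ^ 2 else 0) := by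
      intro S _
      by_cases hiS : i ∈ S
      · have hsum : (∑ j ∈ S, Function.update x i (x i + t) j) = (∑ j ∈ S, x j) + t := by
          rw [Finset.sum_update_of_mem hiS, Finset.sdiff_singleton_eq_erase,
            ← Finset.add_sum_erase S x hiS]
          ring
        rw [hsum, if_pos hiS]; ring
      · have hsum : (∑ j ∈ S, Function.update x i (x i + t) j) = ∑ j ∈ S, x j := by
          refine Finset.sum_congr rfl fun j hj => ?_
          exact Function.update_of_ne (by rintro rfl; exact hiS hj) _ _
        rw [hsum, if_neg hiS]; ring
    unfold addErr
    rw [← hFfull, Finset.sum_congr rfl key, Finset.sum_add_distrib]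
    congr 1
    rw [← Finset.sum_filter, ← hFiFfull, Finset.sum_add_distrib, ← Finset.mul_sum, ← ha,
      Finset.sum_const, nsmul_eq_mul, ← hb]
    ring
  -- stationarity: a = 0
  have hb0 : (0:ℝ) ≤ b := Nat.cast_nonneg _
  have hbpos : (0:ℝ) < b + 1 := by linarith
  have hA : a = 0 := by
    have h1 := hmin (Function.update x i (x i + (-a / (b + 1))))
    rw [expand] at h1
    have h2 : 0 ≤ 2 * (-a / (b + 1)) * a + (-a / (b + 1)) ^ 2 * b := by linarith
    have h3 : (2 * (-a / (b + 1)) * a + (-a / (b + 1)) ^ 2 * b) * (b + 1) ^ 2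
        = -(a ^ 2 * (b + 2)) := by
      field_simp
      ring
    have h4 : 0 ≤ -(a ^ 2 * (b + 2)) := by
      rw [← h3]
      positivity
    nlinarith [sq_nonneg a]
  -- rearrange: ∑ f S = ∑ h S
  have hsumf : (∑ S ∈ Fi, f S) = ∑ S ∈ Fi, ∑ j ∈ S, x j := by
    have h := hA
    rw [ha, Finset.sum_sub_distrib] at h
    linarith
  -- swap the double sum
  have hswap : (∑ S ∈ Fi, ∑ j ∈ S, x j)
      = ∑ j : Fin m, ((Fi.filter (fun S => j ∈ S)).card : ℝ) * x j := by
    have h1 : ∀ S ∈ Fi, (∑ j ∈ S, x j) = ∑ j : Fin m, if j ∈ S then x j else 0 := by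
      intro S _
      rw [Finset.sum_ite_mem, Finset.univ_inter]
    rw [Finset.sum_congr rfl h1, Finset.sum_comm]
    refine Finset.sum_congr rfl fun j _ => ?_
    rw [← Finset.sum_filter, Finset.sum_const, nsmul_eq_mul]
  -- counting: sets containing i
  have hseti : Fi = Finset.univ.filter
      (fun S : Finset (Fin m) => ({i} : Finset (Fin m)) ⊆ S ∧ S.card ≤ k) := by
    simp [hFi, Finset.singleton_subset_iff]
  have hcounti : Fi.card = ∑ t ∈ Finset.range k, Nat.choose (m - 1) t := by
    rw [hseti, count_supersets _ _ (by simpa using hk1)]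
    rw [Finset.card_singleton, Fintype.card_fin,
      show k - 1 + 1 = k from by omega]
  have hfiltri : Fi.filter (fun S => i ∈ S) = Fi := by
    refine Finset.filter_true_of_mem fun S hS => ?_
    rw [hFi, Finset.mem_filter] at hS
    exact hS.2.1
  -- counting: sets containing i and j (j ≠ i)
  have hcountj : ∀ j : Fin m, j ≠ i →
      (Fi.filter (fun S => j ∈ S)).card
        = ∑ t ∈ Finset.range (k - 1), Nat.choose (m - 2) t := by
    intro j hj
    have hset : Fi.filter (fun S => j ∈ S)
        = Finset.univ.filter
            (fun S : Finset (Fin m) => ({i, j} : Finset (Fin m)) ⊆ S ∧ S.card ≤ k) := by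
      ext S
      simp only [hFi, Finset.mem_filter, Finset.mem_univ, true_and,
        Finset.insert_subset_iff, Finset.singleton_subset_iff]
      tauto
    have hB : ({i, j} : Finset (Fin m)).card = 2 := by
      rw [Finset.card_insert_of_notMem (by simpa using (Ne.symm hj)),
        Finset.card_singleton]
    rw [hset]
    by_cases hk2 : 2 ≤ k
    · rw [count_supersets _ _ (by rw [hB]; exact hk2), hB, Fintype.card_fin,
        show k - 2 + 1 = k - 1 from by omega]
    · have hk1' : k = 1 := by omega
      have hempty : Finset.univ.filter
          (fun S : Finset (Fin m) => ({i, j} : Finset (Fin m)) ⊆ S ∧ S.card ≤ k) = ∅ := by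
        ext S
        simp only [Finset.mem_filter, Finset.mem_univ, true_and, Finset.notMem_empty,
          iff_false, not_and]
        intro hsub hcard
        have := Finset.card_le_card hsub
        omega
      rw [hempty, hk1']
      simp
  -- put it all together
  rw [hsumf, hswap, ← Finset.add_sum_erase _ _ (Finset.mem_univ i), hfiltri, hcounti]
  push_cast
  congr 1
  have herase : Finset.univ.filter (fun j : Fin m => j ≠ i) = Finset.univ.erase i := by
    ext j; simp [Finset.mem_erase]
  rw [herase, Finset.mul_sum]
  refine Finset.sum_congr rfl fun j hj => ?_
  rw [hcountj j (Finset.ne_of_mem_erase hj)]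
  push_cast
  ring
end
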